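/- arXiv:2405.07379 — 2 statements merged into one kernel-verified Lean document; each statement's English description precedes it below -/
import Mathlib

section
/- Let $\rho$ be an $N\times N$ density matrix ($N=2J+1$) and let $A_0,\dots,A_{2J}$ be the rank-one spectral projections of $J_z=\operatorname{diag}(J,J-1,\dots,-J)$. Define $V(\rho)=\frac12\sum_{n\neq m}\sqrt{\operatorname{Tr}(\rho A_n)\operatorname{Tr}(\rho A_m)}$ and the Bures distance to the set $\bar E=\{A_0,\dots,A_{2J}\}$ by $d_B(\rho,\bar E)=\min_n\sqrt{2-2\sqrt{\operatorname{Tr}(\rho A_n)}}$. Then $\frac12 d_B(\rho,\bar E) \leq V(\rho) \leq J(2J+1)\, d_B(\rho,\bar E)$. -/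
/-!
Both sides depend on `ρ` only through the populations `pₙ = Tr(ρAₙ)`, a probability vector.
With `S = ∑ √pₙ` and `t = maxₙ √pₙ`, the double sum equals `S² - 1` and
`d_B = √(2 - 2t)`.
Upper bound: in each of the `N(N-1)` off-diagonal products one factor is not the largest,
so `pₙpₘ ≤ 1 - t² ≤ 2 - 2t`. Lower bound: `tS ≥ 1` and `S - t ≥ √(1 - t²)`, hence
`S² - 1 ≥ S(S - t) ≥ √(1 - t²)/t ≥ √(2 - 2t)`.
-/

open Matrix BigOperators
open scoped ComplexOrder

/-- The diagonal rank-one projection onto the `n`-th standard basis vector. -/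
noncomputable def projA {N : ℕ} (n : Fin N) : Matrix (Fin N) (Fin N) ℂ :=
  Matrix.single n n 1

open Finset

theorem Finset.sum_sum_ite_ne {ι M : Type*} [Fintype ι] [DecidableEq ι] [AddCommGroup M]
    (g : ι → ι → M) :
    ∑ n, ∑ m, (if n ≠ m then g n m else 0) = ∑ n, ∑ m, g n m - ∑ n, g n n := by
  have h : ∀ n m, (if n ≠ m then g n m else 0) = g n m - if n = m then g n m else 0 := by
    intro n m
    by_cases hnm : n = m <;> simp [hnm]
  simp only [h, sum_sub_distrib, sum_ite_eq, mem_univ, if_true]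

theorem Finset.sum_sum_ite_ne_const {ι M : Type*} [Fintype ι] [DecidableEq ι] [CommRing M]
    (c : M) :
    ∑ n : ι, ∑ m : ι, (if n ≠ m then c else 0) =
      Fintype.card ι * ((Fintype.card ι : M) - 1) * c := by
  simp only [sum_sum_ite_ne, sum_const, card_univ, nsmul_eq_mul]
  ring

theorem Real.sqrt_sum_le_sum_sqrt {ι : Type*} (s : Finset ι) {f : ι → ℝ}
    (hf : ∀ i ∈ s, 0 ≤ f i) : √(∑ i ∈ s, f i) ≤ ∑ i ∈ s, √(f i) := by
  rw [Real.sqrt_le_iff]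
  refine ⟨sum_nonneg fun i _ => Real.sqrt_nonneg _, ?_⟩
  calc ∑ i ∈ s, f i = ∑ i ∈ s, √(f i) ^ 2 :=
        sum_congr rfl fun i hi => (Real.sq_sqrt (hf i hi)).symm
    _ ≤ (∑ i ∈ s, √(f i)) ^ 2 := sum_sq_le_sq_sum_of_nonneg fun i _ => Real.sqrt_nonneg _

theorem Real.sqrt_two_sub_two_mul_le_sq_sub_one {t S : ℝ} (ht0 : 0 ≤ t) (ht1 : t ≤ 1)
    (htS : 1 ≤ t * S) (hS : √(1 - t ^ 2) ≤ S - t) : √(2 - 2 * t) ≤ S ^ 2 - 1 := by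
  have ht : 0 < t := ht0.lt_of_ne (by rintro rfl; norm_num at htS)
  have hinv : 1 / t ≤ S := by rw [div_le_iff₀ ht]; linarith
  have hSt : 0 ≤ S - t := (Real.sqrt_nonneg _).trans hS
  calc √(2 - 2 * t) = √((2 - 2 * t) * t ^ 2) / t := by
        rw [Real.sqrt_mul (by linarith), Real.sqrt_sq ht.le, mul_div_cancel_right₀ _ ht.ne']
    _ ≤ √(1 - t ^ 2) / t := by
        gcongr
        nlinarith [sq_nonneg (1 - t)]
    _ ≤ (S - t) / t := by gcongr
    _ = 1 / t * (S - t) := by ring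
    _ ≤ S * (S - t) := by gcongr
    _ ≤ S ^ 2 - 1 := by nlinarith

section ProbabilityVector

variable {ι : Type*} [Fintype ι]

/-- The Lyapunov function `V` and the Bures distance `d_B(·, Ē)` of a state, as functions
of its populations `p n = Tr(ρ Aₙ)`. -/
noncomputable def lyapunov [DecidableEq ι] (p : ι → ℝ) : ℝ :=
  (1 / 2) * ∑ n, ∑ m, if n ≠ m then √(p n * p m) else 0

noncomputable def buresDistToBasis [Nonempty ι] (p : ι → ℝ) : ℝ :=
  univ.inf' univ_nonempty fun n => √(2 - 2 * √(p n))

variable {p : ι → ℝ} {i₀ : ι}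

theorem buresDistToBasis_eq_of_forall_le [Nonempty ι] (hmax : ∀ i, p i ≤ p i₀) :
    buresDistToBasis p = √(2 - 2 * √(p i₀)) := by
  refine le_antisymm (inf'_le _ (mem_univ i₀)) (le_inf' _ _ fun i _ => ?_)
  gcongr
  exact hmax i

variable (hp0 : ∀ i, 0 ≤ p i) (hsum : ∑ i, p i = 1)
include hp0 hsum

theorem sum_sum_ite_ne_sqrt_mul_eq [DecidableEq ι] :
    ∑ n, ∑ m, (if n ≠ m then √(p n * p m) else 0) = (∑ n, √(p n)) ^ 2 - 1 := by
  simp only [sum_sum_ite_ne, Real.sqrt_mul (hp0 _), Real.mul_self_sqrt (hp0 _), hsum, sq,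
    sum_mul_sum]

theorem apply_le_one (i : ι) : p i ≤ 1 :=
  hsum ▸ single_le_sum (fun j _ => hp0 j) (mem_univ i)

theorem le_one_sub_of_ne [DecidableEq ι] {i : ι} (hi : i ≠ i₀) : p i ≤ 1 - p i₀ := by
  rw [← hsum, ← sum_erase_eq_sub (mem_univ i₀)]
  exact single_le_sum (fun j _ => hp0 j) (mem_erase.mpr ⟨hi, mem_univ i⟩)

theorem one_le_sqrt_mul_sum_sqrt (hmax : ∀ i, p i ≤ p i₀) :
    1 ≤ √(p i₀) * ∑ i, √(p i) := by
  rw [← hsum, mul_sum]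
  gcongr with i
  calc p i = √(p i) * √(p i) := (Real.mul_self_sqrt (hp0 i)).symm
    _ ≤ √(p i₀) * √(p i) := by gcongr; exact hmax i

theorem sqrt_one_sub_le_sum_sqrt_sub [DecidableEq ι] :
    √(1 - p i₀) ≤ ∑ i, √(p i) - √(p i₀) := by
  rw [← hsum, ← sum_erase_eq_sub (mem_univ i₀), ← sum_erase_eq_sub (mem_univ i₀)]
  exact Real.sqrt_sum_le_sum_sqrt _ fun i _ => hp0 i

theorem sqrt_mul_le_of_ne [DecidableEq ι] (hmax : ∀ i, p i ≤ p i₀) {n m : ι}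
    (hnm : n ≠ m) :
    √(p n * p m) ≤ √(2 - 2 * √(p i₀)) := by
  wlog hm : m ≠ i₀ generalizing n m
  · rw [mul_comm]
    exact this hnm.symm (by rintro rfl; exact hm hnm.symm)
  have hsq : √(p i₀) ^ 2 = p i₀ := Real.sq_sqrt (hp0 i₀)
  gcongr
  nlinarith [le_one_sub_of_ne hp0 hsum hm, apply_le_one hp0 hsum n, hp0 n, hp0 m,
    Real.sqrt_le_one.mpr (apply_le_one hp0 hsum i₀), Real.sqrt_nonneg (p i₀)]

theorem half_buresDistToBasis_le_lyapunov [DecidableEq ι] [Nonempty ι] :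
    (1 / 2) * buresDistToBasis p ≤ lyapunov p := by
  obtain ⟨i₀, hmax⟩ := Finite.exists_max p
  rw [lyapunov, sum_sum_ite_ne_sqrt_mul_eq hp0 hsum, buresDistToBasis_eq_of_forall_le hmax]
  gcongr
  refine Real.sqrt_two_sub_two_mul_le_sq_sub_one (Real.sqrt_nonneg _) ?_
    (one_le_sqrt_mul_sum_sqrt hp0 hsum hmax) ?_
  · exact Real.sqrt_le_one.mpr (apply_le_one hp0 hsum i₀)
  · rw [Real.sq_sqrt (hp0 i₀)]
    exact sqrt_one_sub_le_sum_sqrt_sub hp0 hsum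

theorem lyapunov_le_buresDistToBasis [DecidableEq ι] [Nonempty ι] :
    lyapunov p ≤ ((Fintype.card ι : ℝ) - 1) / 2 * Fintype.card ι * buresDistToBasis p := by
  obtain ⟨i₀, hmax⟩ := Finite.exists_max p
  have hbound : ∀ n m : ι, (if n ≠ m then √(p n * p m) else 0) ≤
      if n ≠ m then buresDistToBasis p else 0 := by
    intro n m
    split_ifs with hnm
    · rw [buresDistToBasis_eq_of_forall_le hmax]
      exact sqrt_mul_le_of_ne hp0 hsum hmax hnm
    · rfl
  calc lyapunov p
      ≤ (1 / 2) * ∑ n : ι, ∑ m : ι, if n ≠ m then buresDistToBasis p else 0 := by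
        rw [lyapunov]
        gcongr with n _ m _
        exact hbound n m
    _ = _ := by
        rw [sum_sum_ite_ne_const]
        ring

end ProbabilityVector

theorem trace_mul_projA {N : ℕ} (ρ : Matrix (Fin N) (Fin N) ℂ) (n : Fin N) :
    (ρ * projA n).trace = ρ n n := by
  simp [projA, trace_mul_single]

theorem lyapunov_bures_comparison_general {twoJ : ℕ}
    (ρ : Matrix (Fin (twoJ + 1)) (Fin (twoJ + 1)) ℂ)
    (hρ : ρ.PosSemidef) (hρtr : ρ.trace = 1) :
    (1 / 2) *
        (Finset.univ.inf' Finset.univ_nonempty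
          (fun n => Real.sqrt (2 - 2 * Real.sqrt (((ρ * projA n).trace).re)))) ≤
      (1 / 2) * ∑ n, ∑ m, (if n ≠ m then
          Real.sqrt (((ρ * projA n).trace).re * ((ρ * projA m).trace).re) else 0) ∧
    (1 / 2) * ∑ n, ∑ m, (if n ≠ m then
          Real.sqrt (((ρ * projA n).trace).re * ((ρ * projA m).trace).re) else 0) ≤
      ((twoJ : ℝ) / 2) * ((twoJ : ℝ) + 1) *
        (Finset.univ.inf' Finset.univ_nonempty
          (fun n => Real.sqrt (2 - 2 * Real.sqrt (((ρ * projA n).trace).re)))) := by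
  set p : Fin (twoJ + 1) → ℝ := fun n => ((ρ * projA n).trace).re
  have hp : ∀ n, p n = (ρ n n).re := fun n => by simp only [p, trace_mul_projA]
  have hp0 : ∀ n, 0 ≤ p n := fun n => hp n ▸ (Complex.le_def.mp hρ.diag_nonneg).1
  have hsum : ∑ n, p n = 1 := by
    simpa only [hp, Matrix.trace, diag_apply, Complex.re_sum, Complex.one_re] using
      congrArg Complex.re hρtr
  have hupper := lyapunov_le_buresDistToBasis hp0 hsum
  rw [Fintype.card_fin, Nat.cast_add, Nat.cast_one, add_sub_cancel_right] at hupper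
  exact ⟨half_buresDistToBasis_le_lyapunov hp0 hsum, hupper⟩

/-- Comparison between the Lyapunov function
`V(ρ) = ½ ∑_{n≠m} √(Tr(ρAₙ)Tr(ρAₘ))` and the Bures distance
`d_B(ρ, Ē) = min_n √(2 - 2√Tr(ρAₙ))` to the set of spectral projections:
`½ d_B ≤ V ≤ J(2J+1) d_B` with `J = twoJ/2` and `N = 2J+1`. -/
theorem lyapunov_bures_comparison {twoJ : ℕ} (hJ : 0 < twoJ)
    (ρ : Matrix (Fin (twoJ + 1)) (Fin (twoJ + 1)) ℂ)
    (hρ : ρ.PosSemidef) (hρtr : ρ.trace = 1) :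
    (1 / 2) *
        (Finset.univ.inf' Finset.univ_nonempty
          (fun n => Real.sqrt (2 - 2 * Real.sqrt (((ρ * projA n).trace).re)))) ≤
      (1 / 2) * ∑ n, ∑ m, (if n ≠ m then
          Real.sqrt (((ρ * projA n).trace).re * ((ρ * projA m).trace).re) else 0) ∧
    (1 / 2) * ∑ n, ∑ m, (if n ≠ m then
          Real.sqrt (((ρ * projA n).trace).re * ((ρ * projA m).trace).re) else 0) ≤
      ((twoJ : ℝ) / 2) * ((twoJ : ℝ) + 1) *
        (Finset.univ.inf' Finset.univ_nonempty
          (fun n => Real.sqrt (2 - 2 * Real.sqrt (((ρ * projA n).trace).re)))) :=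
  lyapunov_bures_comparison_general ρ hρ hρtr
end

section
/- With $d_B(\rho,A_{\bar n})=\sqrt{2-2\sqrt{\operatorname{Tr}(\rho A_{\bar n})}}$ and $\rho_\xi$ the $\xi$-parametrized exponential family state, there exist positive constants such that for $\xi$ small enough, $\frac12\min_{k\neq\bar n}\sqrt{\tfrac{\operatorname{Tr}(\bar\rho_0 A_k)}{\operatorname{Tr}(\bar\rho_0 A_{\bar n})}}\,\|\xi\| \leq d_B(\rho_\xi,A_{\bar n}) \leq 2\max_{k\neq\bar n}\sqrt{\tfrac{\operatorname{Tr}(\bar\rho_0 A_k)}{\operatorname{Tr}(\bar\rho_0 A_{\bar n})}}\,\|\xi\|$. -/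
open Matrix BigOperators
open scoped ComplexOrder

/-!
Orthogonality of the projections kills every cross term of `ρ_ξ A_{n̄}`, leaving
`p := Tr(ρ_ξ A_{n̄}) = t / (t + S)` with `t = Tr(ρ̄₀A_{n̄})` and `S = ∑_{k≠n̄} ξ_k² Tr(ρ̄₀A_k)`.
Then `d_B² = 2 - 2√p` lies between `1 - p` and `2(1 - p)`, and `1 - p = S / (t + S)` lies
between `S / (2t)` and `S / t` once `S ≤ t`. Finally `S / t = ∑ ξ_k² (Tr(ρ̄₀A_k) / t)` is squeezed
between the squared min and max of `√(Tr(ρ̄₀A_k) / t)` times `‖ξ‖²`.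
-/

/-- The `ξ`-parametrized (normalized) exponential family state `ρ_ξ`. -/
noncomputable def rhoXi {N : ℕ} (ρ0 : Matrix (Fin N) (Fin N) ℂ)
    (A : Fin N → Matrix (Fin N) (Fin N) ℂ) (nbar : Fin N) (ξ : Fin N → ℝ) :
    Matrix (Fin N) (Fin N) ℂ :=
  (((ρ0 * A nbar).trace.re +
      ∑ k ∈ Finset.univ.erase nbar, (ξ k) ^ 2 * ((ρ0 * A k).trace.re))⁻¹ : ℝ) •
    (A nbar * ρ0 * A nbar
      + ∑ k ∈ Finset.univ.erase nbar, (ξ k : ℂ) • (A k * ρ0 * A nbar + A nbar * ρ0 * A k)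
      + ∑ k ∈ Finset.univ.erase nbar, ∑ j ∈ Finset.univ.erase nbar,
          ((ξ k * ξ j : ℝ) : ℂ) • (A k * ρ0 * A j))

lemma trace_mul_mul_mul_of_orthogonal {n ι R : Type*} [Fintype n] [DecidableEq ι] [CommRing R]
    {P : ι → Matrix n n R} (horth : ∀ j k, P j * P k = if j = k then P j else 0)
    (ρ : Matrix n n R) (a b c : ι) :
    (P a * ρ * P b * P c).trace = if a = c ∧ b = c then (ρ * P c).trace else 0 := by
  rw [mul_assoc, horth b c]
  by_cases hbc : b = c
  · subst hbc
    rw [if_pos rfl, trace_mul_cycle, horth, trace_mul_comm]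
    by_cases hab : a = b
    · simp [hab]
    · simp [hab, Ne.symm hab]
  · simp [hbc]

lemma re_trace_rhoXi_mul {N : ℕ} (ρ0 : Matrix (Fin N) (Fin N) ℂ)
    (A : Fin N → Matrix (Fin N) (Fin N) ℂ)
    (horth : ∀ j k, A j * A k = if j = k then A j else 0) (nbar : Fin N) (ξ : Fin N → ℝ) :
    ((rhoXi ρ0 A nbar ξ * A nbar).trace).re =
      (ρ0 * A nbar).trace.re /
        ((ρ0 * A nbar).trace.re + ∑ k ∈ Finset.univ.erase nbar, ξ k ^ 2 * (ρ0 * A k).trace.re) := by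
  rw [rhoXi, smul_mul, trace_smul, Complex.smul_re, smul_eq_mul, div_eq_inv_mul]
  congr 1
  simp only [add_mul, Finset.sum_mul, smul_mul, trace_add, trace_sum, trace_smul,
    trace_mul_mul_mul_of_orthogonal horth]
  rw [Finset.sum_eq_zero fun k hk => by simp [Finset.ne_of_mem_erase hk],
    Finset.sum_eq_zero fun k hk => Finset.sum_eq_zero fun _ _ => by simp [Finset.ne_of_mem_erase hk]]
  simp

lemma one_sub_le_two_sub_two_mul_sqrt {p : ℝ} (hp : 0 ≤ p) : 1 - p ≤ 2 - 2 * √p := by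
  nlinarith [Real.sq_sqrt hp, sq_nonneg (√p - 1)]

lemma two_sub_two_mul_sqrt_le {p : ℝ} (hp₀ : 0 ≤ p) (hp₁ : p ≤ 1) :
    2 - 2 * √p ≤ 2 * (1 - p) := by
  nlinarith [Real.sq_sqrt hp₀, Real.sqrt_nonneg p, Real.sqrt_le_one.2 hp₁]

section WeightedSums

variable {ι : Type*} (s : Finset ι) (hs : s.Nonempty) {w x : ι → ℝ}

lemma inf'_sqrt_sq_mul_sum_le (hw : ∀ k ∈ s, 0 ≤ w k) (hx : ∀ k ∈ s, 0 ≤ x k) :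
    (s.inf' hs fun k => √(w k)) ^ 2 * ∑ k ∈ s, x k ≤ ∑ k ∈ s, x k * w k := by
  rw [Finset.mul_sum]
  refine Finset.sum_le_sum fun k hk => ?_
  have hinf : (s.inf' hs fun k => √(w k)) ^ 2 ≤ w k := by
    rw [← Real.sq_sqrt (hw k hk)]
    exact pow_le_pow_left₀ (Finset.le_inf' hs _ fun k _ => Real.sqrt_nonneg _)
      (Finset.inf'_le _ hk) 2
  nlinarith [hx k hk]

lemma sum_mul_le_sup'_sqrt_sq_mul_sum (hx : ∀ k ∈ s, 0 ≤ x k) :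
    ∑ k ∈ s, x k * w k ≤ (s.sup' hs fun k => √(w k)) ^ 2 * ∑ k ∈ s, x k := by
  rw [Finset.mul_sum]
  refine Finset.sum_le_sum fun k hk => ?_
  have hsup : w k ≤ (s.sup' hs fun k => √(w k)) ^ 2 :=
    calc w k ≤ √(w k) ^ 2 := by rw [Real.sq_sqrt']; exact le_max_left _ _
      _ ≤ _ := pow_le_pow_left₀ (Real.sqrt_nonneg _) (Finset.le_sup' (fun k => √(w k)) hk) 2
  nlinarith [hx k hk]

end WeightedSums

lemma sqrt_two_sub_two_mul_sqrt_div_add_bounds {t S σ m M : ℝ} (ht : 0 < t) (hS : 0 ≤ S)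
    (hSt : S ≤ t) (hM : 0 ≤ M) (hσ : 0 ≤ σ) (hmS : m ^ 2 * σ ≤ S / t) (hSM : S / t ≤ M ^ 2 * σ) :
    1 / 2 * m * √σ ≤ √(2 - 2 * √(t / (t + S))) ∧ √(2 - 2 * √(t / (t + S))) ≤ 2 * M * √σ := by
  have hp : 1 - t / (t + S) = S / (t + S) := by field_simp; ring
  have hp₀ : 0 ≤ t / (t + S) := div_nonneg ht.le (by linarith)
  have hp₁ : t / (t + S) ≤ 1 := div_le_one_of_le₀ (by linarith) (by linarith)
  constructor
  · refine (le_abs_self _).trans (Real.abs_le_sqrt ?_)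
    calc (1 / 2 * m * √σ) ^ 2 = m ^ 2 * σ / 4 := by rw [mul_pow, mul_pow, Real.sq_sqrt hσ]; ring
      _ ≤ S / t / 2 := by nlinarith [sq_nonneg m]
      _ = S / (2 * t) := by rw [div_div, mul_comm]
      _ ≤ S / (t + S) := div_le_div_of_nonneg_left hS (by linarith) (by linarith)
      _ ≤ 2 - 2 * √(t / (t + S)) := hp ▸ one_sub_le_two_sub_two_mul_sqrt hp₀
  · rw [Real.sqrt_le_left (by positivity)]
    calc 2 - 2 * √(t / (t + S)) ≤ 2 * (S / (t + S)) := hp ▸ two_sub_two_mul_sqrt_le hp₀ hp₁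
      _ ≤ 2 * (S / t) := by gcongr; linarith
      _ ≤ (2 * M * √σ) ^ 2 := by rw [mul_pow, mul_pow, Real.sq_sqrt hσ]; nlinarith [sq_nonneg M]

theorem bures_rhoXi_comparison_general {N : ℕ}
    (ρ0 : Matrix (Fin N) (Fin N) ℂ)
    (A : Fin N → Matrix (Fin N) (Fin N) ℂ)
    (horth : ∀ j k, A j * A k = if j = k then A j else 0)
    (htr : ∀ k, 0 < ((ρ0 * A k).trace).re)
    (nbar : Fin N) (hne : (Finset.univ.erase nbar).Nonempty)
    (ξ : Fin N → ℝ)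
    (hsmall : ∑ k ∈ Finset.univ.erase nbar, (ξ k) ^ 2 * ((ρ0 * A k).trace).re ≤
      ((ρ0 * A nbar).trace).re) :
    (1 / 2) *
        ((Finset.univ.erase nbar).inf' hne fun k =>
          Real.sqrt (((ρ0 * A k).trace).re / ((ρ0 * A nbar).trace).re)) *
        Real.sqrt (∑ k ∈ Finset.univ.erase nbar, (ξ k) ^ 2) ≤
      Real.sqrt (2 - 2 * Real.sqrt (((rhoXi ρ0 A nbar ξ * A nbar).trace).re)) ∧
    Real.sqrt (2 - 2 * Real.sqrt (((rhoXi ρ0 A nbar ξ * A nbar).trace).re)) ≤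
      2 *
        ((Finset.univ.erase nbar).sup' hne fun k =>
          Real.sqrt (((ρ0 * A k).trace).re / ((ρ0 * A nbar).trace).re)) *
        Real.sqrt (∑ k ∈ Finset.univ.erase nbar, (ξ k) ^ 2) := by
  obtain ⟨k₀, hk₀⟩ := id hne
  rw [re_trace_rhoXi_mul ρ0 A horth nbar ξ]
  refine sqrt_two_sub_two_mul_sqrt_div_add_bounds (htr nbar)
    (Finset.sum_nonneg fun k _ => mul_nonneg (sq_nonneg _) (htr k).le) hsmall
    (Finset.le_sup'_of_le _ hk₀ (Real.sqrt_nonneg _))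
    (Finset.sum_nonneg fun k _ => sq_nonneg _) ?_ ?_ <;>
  simp only [Finset.sum_div, mul_div_assoc]
  · exact inf'_sqrt_sq_mul_sum_le _ _ (fun k _ => div_nonneg (htr k).le (htr nbar).le)
      fun k _ => sq_nonneg _
  · exact sum_mul_le_sup'_sqrt_sq_mul_sum _ _ fun k _ => sq_nonneg _

/-- For `ξ` small enough, the Bures distance `d_B(ρ_ξ, A_{n̄}) = √(2-2√Tr(ρ_ξA_{n̄}))`
is comparable with `‖ξ‖`:
`½ min_{k≠n̄}√(Tr(ρ̄₀Aₖ)/Tr(ρ̄₀A_{n̄})) ‖ξ‖ ≤ d_B(ρ_ξ,A_{n̄}) ≤ 2 max_{k≠n̄}√(Tr(ρ̄₀Aₖ)/Tr(ρ̄₀A_{n̄})) ‖ξ‖`. -/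
theorem bures_rhoXi_comparison {N : ℕ}
    (ρ0 : Matrix (Fin N) (Fin N) ℂ) (hρ0 : ρ0.PosSemidef)
    (A : Fin N → Matrix (Fin N) (Fin N) ℂ)
    (hHerm : ∀ j, (A j).IsHermitian)
    (horth : ∀ j k, A j * A k = if j = k then A j else 0)
    (hsum : ∑ j, A j = 1)
    (hrank : ∀ j, (A j).trace = 1)
    (htr : ∀ k, 0 < ((ρ0 * A k).trace).re)
    (nbar : Fin N) (hne : (Finset.univ.erase nbar).Nonempty)
    (ξ : Fin N → ℝ)
    (hsmall : ∑ k ∈ Finset.univ.erase nbar, (ξ k) ^ 2 * ((ρ0 * A k).trace).re ≤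
      ((ρ0 * A nbar).trace).re) :
    (1 / 2) *
        ((Finset.univ.erase nbar).inf' hne fun k =>
          Real.sqrt (((ρ0 * A k).trace).re / ((ρ0 * A nbar).trace).re)) *
        Real.sqrt (∑ k ∈ Finset.univ.erase nbar, (ξ k) ^ 2) ≤
      Real.sqrt (2 - 2 * Real.sqrt (((rhoXi ρ0 A nbar ξ * A nbar).trace).re)) ∧
    Real.sqrt (2 - 2 * Real.sqrt (((rhoXi ρ0 A nbar ξ * A nbar).trace).re)) ≤
      2 *
        ((Finset.univ.erase nbar).sup' hne fun k =>
          Real.sqrt (((ρ0 * A k).trace).re / ((ρ0 * A nbar).trace).re)) *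
        Real.sqrt (∑ k ∈ Finset.univ.erase nbar, (ξ k) ^ 2) :=
  bures_rhoXi_comparison_general ρ0 A horth htr nbar hne ξ hsmall
end
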